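/- arXiv:2010.08039 — 3 statements merged into one kernel-verified Lean document; each statement's English description precedes it below -/
import Mathlib

section
/- A complete metric space satisfying the approximate-midpoint property (for every r > 1/2 and points x,y there exists z with max{d(x,z), d(z,y)} ≤ r·d(x,y)) is a length space: the distance between any two points equals the infimum of lengths of continuous paths joining them. -/
/-!
Given `ε > 0`, insert approximate midpoints with ratio `exp (ε / 2 ^ (n + 1)) / 2` at the `n`-th
refinement. The ratios multiply to at most `exp ε / 2 ^ n`, so consecutive points of the `n`-th
refinement are within `exp ε * d(x, y) / 2 ^ n`: they are the dyadic samples of an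
`exp ε * d(x, y)`-Lipschitz path, obtained by completeness as a limit of step functions, whose
length is at most `exp ε * d(x, y)`. Conversely, no path is shorter than the distance of its
endpoints.
-/

open Set Filter Topology
open scoped NNReal ENNReal

theorem Nat.abs_floor_sub_floor_le {K : Type*} [Field K] [LinearOrder K] [IsStrictOrderedRing K]
    [FloorSemiring K] (a b : K) : |(⌊b⌋₊ : K) - ⌊a⌋₊| ≤ |b - a| + 1 := by
  wlog hab : a ≤ b generalizing a b
  · rw [abs_sub_comm, abs_sub_comm b]
    exact this b a (le_of_not_ge hab)
  have hfloor : (⌊a⌋₊ : K) ≤ ⌊b⌋₊ := by exact_mod_cast Nat.floor_le_floor hab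
  rw [abs_of_nonneg (sub_nonneg.2 hfloor), abs_of_nonneg (sub_nonneg.2 hab)]
  have ha := Nat.lt_floor_add_one a
  rcases le_or_gt 0 b with hb | hb
  · linarith [Nat.floor_le hb]
  · rw [Nat.floor_of_nonpos hb.le]
    push_cast
    linarith [(Nat.cast_nonneg ⌊a⌋₊ : (0 : K) ≤ _)]

theorem dist_le_abs_sub_mul_of_dist_succ_le {α : Type*} [PseudoMetricSpace α] {g : ℕ → α} {B : ℝ}
    (h : ∀ k, dist (g k) (g (k + 1)) ≤ B) (k l : ℕ) :
    dist (g k) (g l) ≤ |(l : ℝ) - k| * B := by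
  wlog hkl : k ≤ l generalizing k l
  · rw [dist_comm, abs_sub_comm]
    exact this l k (by omega)
  calc dist (g k) (g l) ≤ ∑ i ∈ Finset.Ico k l, dist (g i) (g (i + 1)) :=
        dist_le_Ico_sum_dist g hkl
    _ ≤ ∑ _i ∈ Finset.Ico k l, B := Finset.sum_le_sum fun i _ ↦ h i
    _ = |(l : ℝ) - k| * B := by
      rw [Finset.sum_const, Nat.card_Ico, nsmul_eq_mul, Nat.cast_sub hkl,
        abs_of_nonneg (sub_nonneg.2 (by exact_mod_cast hkl))]

theorem LipschitzWith.of_tendsto_of_dist_le_add {α β : Type*} [PseudoMetricSpace α]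
    [PseudoMetricSpace β] {u : ℕ → α → β} {c : α → β} {K : ℝ≥0} {δ : ℕ → ℝ}
    (hδ : Tendsto δ atTop (𝓝 0)) (hu : ∀ n a b, dist (u n a) (u n b) ≤ K * dist a b + δ n)
    (hc : ∀ a, Tendsto (u · a) atTop (𝓝 (c a))) : LipschitzWith K c :=
  LipschitzWith.of_dist_le_mul fun a b ↦ le_of_tendsto_of_tendsto' ((hc a).dist (hc b))
    (by simpa using tendsto_const_nhds.add hδ) (hu · a b)

section DyadicScheme

variable {M : Type*} {f : ℕ → ℕ → M}

theorem apply_add_two_pow_mul (h_even : ∀ n k, f (n + 1) (2 * k) = f n k) (n m k : ℕ) :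
    f (n + m) (2 ^ m * k) = f n k := by
  induction m with
  | zero => simp
  | succ m ih => rw [← add_assoc, pow_succ', mul_assoc, h_even, ih]

theorem exists_lipschitzWith_of_dyadic [MetricSpace M] [CompleteSpace M] {L : ℝ≥0}
    (h_even : ∀ n k, f (n + 1) (2 * k) = f n k)
    (h_step : ∀ n k, dist (f n k) (f n (k + 1)) ≤ L / 2 ^ n) :
    ∃ c : ℝ → M, LipschitzWith L c ∧ ∀ n (k : ℕ), c (k / 2 ^ n) = f n k := by
  set u : ℕ → ℝ → M := fun n t ↦ f n ⌊t * 2 ^ n⌋₊ with hu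
  have hu_succ : ∀ t n, dist (u n t) (u (n + 1) t) ≤ L / 2 / 2 ^ n := by
    intro t n
    have hfloor : ⌊t * 2 ^ n⌋₊ = ⌊t * 2 ^ (n + 1)⌋₊ / 2 := by
      rw [← Nat.floor_div_ofNat, pow_succ]
      congr 1
      ring
    obtain ⟨j, hj | hj⟩ := Nat.even_or_odd' ⌊t * 2 ^ (n + 1)⌋₊
    · have : u n t = u (n + 1) t := by simp only [hu, hfloor, hj, h_even]; congr 1; omega
      rw [this, dist_self]
      positivity
    · simp only [hu, hfloor, hj, show (2 * j + 1) / 2 = j by omega]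
      rw [← h_even]
      calc _ ≤ (L : ℝ) / 2 ^ (n + 1) := h_step (n + 1) (2 * j)
        _ = L / 2 / 2 ^ n := by rw [pow_succ']; ring
  have hu_lip : ∀ n s t, dist (u n s) (u n t) ≤ L * dist s t + L / 2 ^ n := by
    intro n s t
    have h2n : (0 : ℝ) < 2 ^ n := by positivity
    calc dist (u n s) (u n t)
        ≤ |(⌊t * 2 ^ n⌋₊ : ℝ) - ⌊s * 2 ^ n⌋₊| * (L / 2 ^ n) :=
          dist_le_abs_sub_mul_of_dist_succ_le (h_step n) _ _
      _ ≤ (|t * 2 ^ n - s * 2 ^ n| + 1) * (L / 2 ^ n) := by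
          gcongr
          exact Nat.abs_floor_sub_floor_le _ _
      _ = L * dist s t + L / 2 ^ n := by
          rw [← sub_mul, abs_mul, abs_of_pos h2n, Real.dist_eq, abs_sub_comm]
          field_simp
  choose c hc using fun t ↦
    cauchySeq_tendsto_of_complete (cauchySeq_of_le_geometric_two (hu_succ t))
  refine ⟨c, LipschitzWith.of_tendsto_of_dist_le_add ?_ hu_lip hc, fun n k ↦ ?_⟩
  · simpa [div_eq_mul_inv] using (tendsto_pow_atTop_nhds_zero_of_lt_one (r := (1 / 2 : ℝ))
      (by norm_num) (by norm_num)).const_mul (L : ℝ)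
  refine tendsto_nhds_unique (hc _) (tendsto_const_nhds.congr' ?_)
  filter_upwards [eventually_ge_atTop n] with m hm
  obtain ⟨m, rfl⟩ := Nat.exists_eq_add_of_le hm
  have : (k : ℝ) / 2 ^ n * 2 ^ (n + m) = ((2 ^ m * k : ℕ) : ℝ) := by
    push_cast
    rw [pow_add]
    field_simp
  simp only [hu, this, Nat.floor_natCast, apply_add_two_pow_mul h_even]

end DyadicScheme

section Midpoints

variable {M : Type*}

def insertMidpoints (m : M → M → M) (g : ℕ → M) (k : ℕ) : M :=
  if k % 2 = 0 then g (k / 2) else m (g (k / 2)) (g (k / 2 + 1))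

@[simp]
theorem insertMidpoints_two_mul (m : M → M → M) (g : ℕ → M) (k : ℕ) :
    insertMidpoints m g (2 * k) = g k := by
  simp [insertMidpoints]

@[simp]
theorem insertMidpoints_two_mul_add_one (m : M → M → M) (g : ℕ → M) (k : ℕ) :
    insertMidpoints m g (2 * k + 1) = m (g k) (g (k + 1)) := by
  simp [insertMidpoints, Nat.add_mod, show (2 * k + 1) / 2 = k by omega]

theorem dist_insertMidpoints_succ_le [PseudoMetricSpace M] {m : M → M → M} {r : ℝ} (hr : 0 ≤ r)
    (hm : ∀ a b, max (dist a (m a b)) (dist (m a b) b) ≤ r * dist a b) {g : ℕ → M} {B : ℝ}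
    (hg : ∀ k, dist (g k) (g (k + 1)) ≤ B) (k : ℕ) :
    dist (insertMidpoints m g k) (insertMidpoints m g (k + 1)) ≤ r * B := by
  obtain ⟨j, rfl | rfl⟩ := Nat.even_or_odd' k
  · rw [insertMidpoints_two_mul, insertMidpoints_two_mul_add_one]
    exact ((le_max_left _ _).trans (hm _ _)).trans (mul_le_mul_of_nonneg_left (hg j) hr)
  · rw [insertMidpoints_two_mul_add_one, show 2 * j + 1 + 1 = 2 * (j + 1) by ring,
      insertMidpoints_two_mul]
    exact ((le_max_right _ _).trans (hm _ _)).trans (mul_le_mul_of_nonneg_left (hg j) hr)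

/-- Level `n` lists the points of a path from `x` to `y` at the dyadic rationals `k / 2 ^ n`
(constant `y` beyond `k = 2 ^ n`). -/
def midpointScheme (x y : M) (mid : ℕ → M → M → M) : ℕ → ℕ → M
  | 0 => fun k ↦ if k = 0 then x else y
  | n + 1 => insertMidpoints (mid n) (midpointScheme x y mid n)

end Midpoints

theorem exists_lipschitzWith_of_approx_midpoint {M : Type*} [MetricSpace M] [CompleteSpace M]
    (h : ∀ r : ℝ, 1 / 2 < r → ∀ x y : M, ∃ z : M, max (dist x z) (dist z y) ≤ r * dist x y)
    (x y : M) {ε : ℝ} (hε : 0 < ε) :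
    ∃ c : ℝ → M, LipschitzWith (Real.toNNReal (Real.exp ε * dist x y)) c ∧ c 0 = x ∧ c 1 = y := by
  have hr : ∀ n : ℕ, 1 / 2 < Real.exp (ε / 2 ^ (n + 1)) / 2 := fun n ↦ by
    linarith [Real.one_lt_exp_iff.2 (by positivity : 0 < ε / 2 ^ (n + 1))]
  choose mid hmid using fun n ↦ h _ (hr n)
  set f := midpointScheme x y mid
  -- the ratios `exp (ε / 2 ^ (j + 1))` of the levels `j < n` multiply to `exp (ε - ε / 2 ^ n)`
  have h_step : ∀ n k,
      dist (f n k) (f n (k + 1)) ≤ Real.exp (ε - ε / 2 ^ n) * dist x y / 2 ^ n := by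
    intro n
    induction n with
    | zero =>
      intro k
      rcases k with _ | k <;> simp [f, midpointScheme]
    | succ n ih =>
      intro k
      calc dist (f (n + 1) k) (f (n + 1) (k + 1))
          ≤ Real.exp (ε / 2 ^ (n + 1)) / 2 * (Real.exp (ε - ε / 2 ^ n) * dist x y / 2 ^ n) :=
            dist_insertMidpoints_succ_le (by positivity) (hmid n) ih k
        _ = Real.exp (ε - ε / 2 ^ (n + 1)) * dist x y / 2 ^ (n + 1) := by
            rw [show ε - ε / 2 ^ (n + 1) = ε / 2 ^ (n + 1) + (ε - ε / 2 ^ n) by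
              rw [pow_succ]; ring, Real.exp_add, pow_succ]
            ring
  obtain ⟨c, hc, hc_dyadic⟩ := exists_lipschitzWith_of_dyadic (f := f)
    (L := Real.toNNReal (Real.exp ε * dist x y)) (fun n k ↦ insertMidpoints_two_mul _ _ k)
    fun n k ↦ (h_step n k).trans <| by
      rw [Real.coe_toNNReal _ (by positivity)]
      gcongr
      linarith [(by positivity : 0 ≤ ε / 2 ^ n)]
  refine ⟨c, hc, ?_, ?_⟩
  · simpa [f, midpointScheme] using hc_dyadic 0 0
  · simpa [f, midpointScheme] using hc_dyadic 0 1

/-- A complete metric space with the approximate-midpoint property is a length space: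
the distance between any two points is the infimum of the lengths (total variations)
of continuous curves joining them. -/
theorem stmt_6 {M : Type*} [MetricSpace M] [CompleteSpace M]
    (h : ∀ r : ℝ, 1 / 2 < r → ∀ x y : M, ∃ z : M,
      max (dist x z) (dist z y) ≤ r * dist x y) :
    ∀ x y : M, edist x y =
      ⨅ (c : ℝ → M) (_ : ContinuousOn c (Set.Icc 0 1)) (_ : c 0 = x) (_ : c 1 = y),
        eVariationOn c (Set.Icc 0 1) := by
  intro x y
  refine le_antisymm (le_iInf₂ fun c _ ↦ le_iInf₂ fun hc0 hc1 ↦ ?_) ?_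
  · simpa [hc0, hc1] using
      eVariationOn.edist_le c (left_mem_Icc.2 zero_le_one) (right_mem_Icc.2 zero_le_one)
  have h_curve : ∀ ε > 0, (⨅ (c : ℝ → M) (_ : ContinuousOn c (Icc 0 1)) (_ : c 0 = x)
      (_ : c 1 = y), eVariationOn c (Icc 0 1)) ≤ ENNReal.ofReal (Real.exp ε * dist x y) := by
    intro ε hε
    obtain ⟨c, hc, hc0, hc1⟩ := exists_lipschitzWith_of_approx_midpoint h x y hε
    refine iInf₂_le_of_le c hc.continuous.continuousOn <| iInf₂_le_of_le hc0 hc1 ?_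
    simpa [eVariationOn_id_Icc, ENNReal.ofReal] using
      (hc.lipschitzOnWith (s := Icc 0 1)).comp_eVariationOn_le (mapsTo_id (Icc (0 : ℝ) 1))
  have h_lim : Tendsto (fun ε ↦ ENNReal.ofReal (Real.exp ε * dist x y)) (𝓝[>] 0)
      (𝓝 (edist x y)) := by
    refine ((ENNReal.continuous_ofReal.comp (Real.continuous_exp.mul continuous_const)).tendsto'
      0 _ ?_).mono_left nhdsWithin_le_nhds
    simp [edist_dist]
  exact ge_of_tendsto h_lim (eventually_nhdsWithin_of_forall h_curve)
end

section
/- Finite Hewitt–Savage theorem: the extreme points of the convex set of S_n-invariant Borel probability measures on M^n are precisely the measures of the form (1/n!) Σ_{σ∈S_n} δ_{x∘σ} for x ∈ M^n, and every symmetric probability measure on M^n is a mixture of such extreme points. -/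
open MeasureTheory

/-- The uniform measure `(1/n!) Σ_{σ∈S_n} δ_{x∘σ}` on the `S_n`-orbit of `x ∈ M^n`. -/
noncomputable def orbitMeasure {M : Type*} [MeasurableSpace M] (n : ℕ) (x : Fin n → M) :
    Measure (Fin n → M) :=
  ((n.factorial : ENNReal))⁻¹ • ∑ σ : Equiv.Perm (Fin n), Measure.dirac (x ∘ σ)

/-- A measure on `M^n` is symmetric if it is invariant under the coordinate-permutation
action of `S_n`. -/
def IsSymmetric {M : Type*} [MeasurableSpace M] (n : ℕ) (P : Measure (Fin n → M)) : Prop :=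
  ∀ σ : Equiv.Perm (Fin n), P.map (fun x => x ∘ σ) = P

/-
A symmetric `P` is the `P`-average of the orbit measures, `P = P.bind (orbitMeasure n)`; this is
the mixture representation, and it shows that `P` is an orbit measure as soon as it lives on a
single orbit. If `P` is extreme, every permutation-invariant set `A` has measure `0` or `1`, since
otherwise `P = P A • P[|A] + (1 - P A) • P[|Aᶜ]` is a nontrivial convex decomposition. The
saturations of the sets of a countable basis of `M^n` are invariant, so `P`-almost every point lies
in exactly the same saturations as one fixed point `x`; as the orbit of `x` is finite, hence
closed, almost every point lies on that orbit. Conversely, every term of a convex decomposition of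
`orbitMeasure n x` is absolutely continuous with respect to it, so it lives on the orbit of `x`
and, being symmetric, equals `orbitMeasure n x`.
-/

open ProbabilityTheory

lemma exists_ae_forall_mem_iff_of_measure_eq_zero_or_one {X : Type*} [MeasurableSpace X]
    (P : Measure X) [IsProbabilityMeasure P] {𝒜 : Set (Set X)} (h𝒜 : 𝒜.Countable)
    (hmeas : ∀ A ∈ 𝒜, MeasurableSet A) (h01 : ∀ A ∈ 𝒜, P A = 0 ∨ P A = 1) :
    ∃ x, ∀ᵐ y ∂P, ∀ A ∈ 𝒜, y ∈ A ↔ x ∈ A := by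
  have hae : ∀ᵐ y ∂P, ∀ A ∈ 𝒜, y ∈ A ↔ P A = 1 := by
    refine (ae_ball_iff h𝒜).2 fun A hA => ?_
    rcases h01 A hA with h | h
    · simpa [h] using measure_eq_zero_iff_ae_notMem.1 h
    · simpa [h] using (mem_ae_iff_prob_eq_one (hmeas A hA)).2 h
  obtain ⟨x, hx⟩ := hae.exists
  exact ⟨x, hae.mono fun y hy A hA => (hy A hA).trans (hx A hA).symm⟩

section OrbitMeasure

variable {M : Type*} {n : ℕ}

lemma measurable_comp_perm [MeasurableSpace M] (σ : Equiv.Perm (Fin n)) :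
    Measurable fun x : Fin n → M => x ∘ σ :=
  measurable_pi_lambda _ fun i => measurable_pi_apply (σ i)

lemma continuous_comp_perm [TopologicalSpace M] (σ : Equiv.Perm (Fin n)) :
    Continuous fun x : Fin n → M => x ∘ σ :=
  continuous_pi fun i => continuous_apply (σ i)

variable [MeasurableSpace M]

lemma orbitMeasure_apply (x : Fin n → M) {s : Set (Fin n → M)} (hs : MeasurableSet s) :
    orbitMeasure n x s
      = (n.factorial : ENNReal)⁻¹ * ∑ σ : Equiv.Perm (Fin n), s.indicator 1 (x ∘ σ) := by
  simp only [orbitMeasure, Measure.smul_apply, Measure.finsetSum_apply, smul_eq_mul,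
    Measure.dirac_apply' _ hs]

lemma orbitMeasure_comp_perm (x : Fin n → M) (τ : Equiv.Perm (Fin n)) :
    orbitMeasure n (x ∘ τ) = orbitMeasure n x := by
  unfold orbitMeasure
  congr 1
  exact Fintype.sum_equiv (Equiv.mulLeft τ) _ _ fun σ => rfl

lemma measurable_orbitMeasure :
    Measurable (orbitMeasure n : (Fin n → M) → Measure (Fin n → M)) := by
  refine Measure.measurable_of_measurable_coe _ fun s hs => ?_
  simp_rw [orbitMeasure_apply _ hs]
  exact (Finset.measurable_sum _ fun σ _ =>
    (measurable_const.indicator hs).comp (measurable_comp_perm σ)).const_mul _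

lemma inv_factorial_mul_factorial : ((n.factorial : ENNReal))⁻¹ * n.factorial = 1 :=
  ENNReal.inv_mul_cancel (by exact_mod_cast n.factorial_ne_zero) (ENNReal.natCast_ne_top _)

instance isProbabilityMeasure_orbitMeasure (x : Fin n → M) :
    IsProbabilityMeasure (orbitMeasure n x) := by
  constructor
  simp [orbitMeasure_apply x MeasurableSet.univ, Fintype.card_perm, inv_factorial_mul_factorial]

lemma IsSymmetric.bind_orbitMeasure {P : Measure (Fin n → M)} (hP : IsSymmetric n P) :
    P.bind (orbitMeasure n) = P := by
  ext s hs
  have hind : ∀ σ : Equiv.Perm (Fin n),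
      Measurable fun y : Fin n → M => s.indicator (1 : (Fin n → M) → ENNReal) (y ∘ σ) :=
    fun σ => (measurable_const.indicator hs).comp (measurable_comp_perm σ)
  have hσ : ∀ σ : Equiv.Perm (Fin n), ∫⁻ y, s.indicator 1 (y ∘ σ) ∂P = P s := fun σ => by
    rw [← lintegral_map (f := s.indicator 1) (measurable_const.indicator hs)
      (measurable_comp_perm σ), hP σ, lintegral_indicator_one hs]
  simp_rw [Measure.bind_apply hs measurable_orbitMeasure.aemeasurable, orbitMeasure_apply _ hs]
  rw [lintegral_const_mul _ (Finset.measurable_sum _ fun σ _ => hind σ),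
    lintegral_finsetSum _ fun σ _ => hind σ]
  simp [hσ, ← mul_assoc, Fintype.card_perm, inv_factorial_mul_factorial]

lemma IsSymmetric.eq_orbitMeasure {P : Measure (Fin n → M)} [IsProbabilityMeasure P]
    (hP : IsSymmetric n P) {x : Fin n → M}
    (hx : ∀ᵐ y ∂P, y ∈ Set.range fun σ : Equiv.Perm (Fin n) => x ∘ σ) :
    P = orbitMeasure n x := by
  have hconst : orbitMeasure n =ᵐ[P] fun _ => orbitMeasure n x := by
    filter_upwards [hx] with y ⟨σ, hσ⟩
    rw [← hσ, orbitMeasure_comp_perm]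
  rw [← hP.bind_orbitMeasure, Measure.bind_congr_right hconst, Measure.bind_const,
    measure_univ, one_smul]

lemma ae_orbitMeasure_mem_range [MeasurableSingletonClass M] (x : Fin n → M) :
    ∀ᵐ y ∂orbitMeasure n x, y ∈ Set.range fun σ : Equiv.Perm (Fin n) => x ∘ σ := by
  have hmeas : MeasurableSet (Set.range fun σ : Equiv.Perm (Fin n) => x ∘ σ)ᶜ :=
    (Set.finite_range _).measurableSet.compl
  rw [ae_iff, ← Set.compl_ofPred, Set.ofPred_mem_eq, orbitMeasure_apply x hmeas]
  simp

lemma isSymmetric_orbitMeasure (x : Fin n → M) : IsSymmetric n (orbitMeasure n x) := by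
  intro τ
  ext s hs
  rw [Measure.map_apply (measurable_comp_perm τ) hs,
    orbitMeasure_apply x (measurable_comp_perm τ hs), orbitMeasure_apply x hs]
  congr 1
  exact Fintype.sum_equiv (Equiv.mulRight τ) _ _ fun σ => rfl

end OrbitMeasure

section Saturation

variable {M : Type*} {n : ℕ}

def permSaturation (U : Set (Fin n → M)) : Set (Fin n → M) :=
  ⋃ σ : Equiv.Perm (Fin n), (fun y => y ∘ σ) ⁻¹' U

lemma mem_permSaturation {U : Set (Fin n → M)} {y : Fin n → M} :
    y ∈ permSaturation U ↔ ∃ σ : Equiv.Perm (Fin n), y ∘ σ ∈ U :=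
  Set.mem_iUnion

lemma preimage_permSaturation (U : Set (Fin n → M)) (τ : Equiv.Perm (Fin n)) :
    (fun y => y ∘ τ) ⁻¹' permSaturation U = permSaturation U := by
  ext y
  simp only [Set.mem_preimage, mem_permSaturation]
  constructor
  · rintro ⟨σ, hσ⟩
    exact ⟨τ * σ, hσ⟩
  · rintro ⟨σ, hσ⟩
    exact ⟨τ⁻¹ * σ, by simpa [Function.comp_assoc, ← Equiv.Perm.coe_mul] using hσ⟩

lemma isOpen_permSaturation [TopologicalSpace M] {U : Set (Fin n → M)} (hU : IsOpen U) :
    IsOpen (permSaturation U) :=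
  isOpen_iUnion fun σ => hU.preimage (continuous_comp_perm σ)

lemma mem_range_comp_perm_of_forall_mem_permSaturation [TopologicalSpace M] [T1Space M]
    {B : Set (Set (Fin n → M))} (hB : TopologicalSpace.IsTopologicalBasis B)
    {x y : Fin n → M} (h : ∀ U ∈ B, y ∈ U → x ∈ permSaturation U) :
    y ∈ Set.range fun σ : Equiv.Perm (Fin n) => x ∘ σ := by
  by_contra hy
  obtain ⟨U, hU, hyU, hUorb⟩ :=
    hB.exists_subset_of_mem_open hy (Set.finite_range _).isClosed.isOpen_compl
  obtain ⟨σ, hσ⟩ := mem_permSaturation.1 (h U hU hyU)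
  exact hUorb hσ ⟨σ, rfl⟩

end Saturation

def IsExtremeSymmetric {M : Type*} [MeasurableSpace M] (n : ℕ) (P : Measure (Fin n → M)) :
    Prop :=
  ∀ (Q R : Measure (Fin n → M)) (t : ENNReal),
    IsProbabilityMeasure Q → IsSymmetric n Q →
    IsProbabilityMeasure R → IsSymmetric n R →
    0 < t → t < 1 → P = t • Q + (1 - t) • R → Q = P ∧ R = P

section Extreme

variable {M : Type*} [MeasurableSpace M] {n : ℕ}

lemma IsSymmetric.cond {P : Measure (Fin n → M)} (hP : IsSymmetric n P)
    {A : Set (Fin n → M)} (hA : MeasurableSet A)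
    (hinv : ∀ σ : Equiv.Perm (Fin n), (fun y => y ∘ σ) ⁻¹' A = A) :
    IsSymmetric n P[|A] := by
  intro σ
  have h := Measure.restrict_map (μ := P) (measurable_comp_perm σ) hA
  rw [hP σ, hinv σ] at h
  rw [ProbabilityTheory.cond, Measure.map_smul, ← h]

lemma IsExtremeSymmetric.measure_eq_zero_or_one {P : Measure (Fin n → M)}
    [IsProbabilityMeasure P] (hext : IsExtremeSymmetric n P) (hP : IsSymmetric n P)
    {A : Set (Fin n → M)} (hA : MeasurableSet A)
    (hinv : ∀ σ : Equiv.Perm (Fin n), (fun y => y ∘ σ) ⁻¹' A = A) :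
    P A = 0 ∨ P A = 1 := by
  by_contra! h
  obtain ⟨h0, h1⟩ := h
  have hc0 : P Aᶜ ≠ 0 := by rwa [Ne, prob_compl_eq_zero_iff hA]
  have hinvc : ∀ σ : Equiv.Perm (Fin n), (fun y => y ∘ σ) ⁻¹' Aᶜ = Aᶜ := fun σ => by
    rw [Set.preimage_compl, hinv σ]
  have hdecomp : P = P A • P[|A] + (1 - P A) • P[|Aᶜ] := by
    ext s hs
    simp only [Measure.add_apply, Measure.smul_apply, smul_eq_mul, ← prob_compl_eq_one_sub hA]
    rw [mul_comm (P A), mul_comm (P Aᶜ), cond_add_cond_compl_eq hA]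
  obtain ⟨hcond, -⟩ := hext _ _ (P A) (cond_isProbabilityMeasure h0) (hP.cond hA hinv)
    (cond_isProbabilityMeasure hc0) (hP.cond hA.compl hinvc) (pos_iff_ne_zero.2 h0)
    (prob_le_one.lt_of_ne h1) hdecomp
  exact h1 (by rw [← hcond, cond_apply_self h0 (measure_ne_top _ _)])

end Extreme

section HewittSavage

variable {M : Type*} [MeasurableSpace M] {n : ℕ}

theorem IsExtremeSymmetric.exists_eq_orbitMeasure [TopologicalSpace M] [T1Space M]
    [SecondCountableTopology M] [OpensMeasurableSpace M] {P : Measure (Fin n → M)}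
    [IsProbabilityMeasure P] (hext : IsExtremeSymmetric n P) (hP : IsSymmetric n P) :
    ∃ x, P = orbitMeasure n x := by
  have hB := TopologicalSpace.isBasis_countableBasis (Fin n → M)
  have hmeas : ∀ U ∈ TopologicalSpace.countableBasis (Fin n → M),
      MeasurableSet (permSaturation U) :=
    fun U hU => (isOpen_permSaturation (hB.isOpen hU)).measurableSet
  obtain ⟨x, hx⟩ := exists_ae_forall_mem_iff_of_measure_eq_zero_or_one P
    ((TopologicalSpace.countable_countableBasis _).image permSaturation)
    (Set.forall_mem_image.2 hmeas)
    (Set.forall_mem_image.2 fun U hU =>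
      hext.measure_eq_zero_or_one hP (hmeas U hU) (preimage_permSaturation U))
  refine ⟨x, hP.eq_orbitMeasure (hx.mono fun y hy => ?_)⟩
  exact mem_range_comp_perm_of_forall_mem_permSaturation hB fun U hU hyU =>
    (hy _ (Set.mem_image_of_mem _ hU)).1 (mem_permSaturation.2 ⟨1, hyU⟩)

theorem isExtremeSymmetric_orbitMeasure [MeasurableSingletonClass M] (x : Fin n → M) :
    IsExtremeSymmetric n (orbitMeasure n x) := by
  intro Q R t _ hQ _ hR ht0 ht1 hdecomp
  have hQ_ac : Q ≪ orbitMeasure n x :=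
    hdecomp ▸ (Measure.absolutelyContinuous_smul ht0.ne').add_right _
  have hR_ac : R ≪ orbitMeasure n x :=
    hdecomp ▸ (Measure.absolutelyContinuous_smul (tsub_pos_of_lt ht1).ne').add_right' _
  exact ⟨hQ.eq_orbitMeasure (hQ_ac.ae_le (ae_orbitMeasure_mem_range x)),
    hR.eq_orbitMeasure (hR_ac.ae_le (ae_orbitMeasure_mem_range x))⟩

end HewittSavage

theorem stmt_17_general {M : Type*} [MetricSpace M] [SecondCountableTopology M]
    [MeasurableSpace M] [BorelSpace M] (n : ℕ) :
    (∀ P : Measure (Fin n → M),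
      (IsProbabilityMeasure P ∧ IsSymmetric n P ∧
        ∀ (Q R : Measure (Fin n → M)) (t : ENNReal),
          IsProbabilityMeasure Q → IsSymmetric n Q →
          IsProbabilityMeasure R → IsSymmetric n R →
          0 < t → t < 1 → P = t • Q + (1 - t) • R → Q = P ∧ R = P)
      ↔ ∃ x : Fin n → M, P = orbitMeasure n x) ∧
    (∀ P : Measure (Fin n → M), IsProbabilityMeasure P → IsSymmetric n P →
      ∃ ν : Measure (Fin n → M), IsProbabilityMeasure ν ∧
        P = ν.bind (orbitMeasure n)) := by
  refine ⟨fun P => ⟨?_, ?_⟩, fun P hprob hP => ⟨P, hprob, hP.bind_orbitMeasure.symm⟩⟩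
  · rintro ⟨_, hP, hext⟩
    exact IsExtremeSymmetric.exists_eq_orbitMeasure hext hP
  · rintro ⟨x, rfl⟩
    exact ⟨inferInstance, isSymmetric_orbitMeasure x, isExtremeSymmetric_orbitMeasure x⟩

/-- Finite Hewitt–Savage theorem: the extreme points of the convex set of symmetric Borel
probability measures on `M^n` are precisely the measures `(1/n!) Σ_{σ∈S_n} δ_{x∘σ}` for
`x ∈ M^n`, and every symmetric probability measure on `M^n` is a mixture of such extreme
points. -/
theorem stmt_17 {M : Type*} [MetricSpace M] [CompleteSpace M] [SecondCountableTopology M]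
    [MeasurableSpace M] [BorelSpace M] (n : ℕ) (hn : 1 ≤ n) :
    (∀ P : Measure (Fin n → M),
      (IsProbabilityMeasure P ∧ IsSymmetric n P ∧
        ∀ (Q R : Measure (Fin n → M)) (t : ENNReal),
          IsProbabilityMeasure Q → IsSymmetric n Q →
          IsProbabilityMeasure R → IsSymmetric n R →
          0 < t → t < 1 → P = t • Q + (1 - t) • R → Q = P ∧ R = P)
      ↔ ∃ x : Fin n → M, P = orbitMeasure n x) ∧
    (∀ P : Measure (Fin n → M), IsProbabilityMeasure P → IsSymmetric n P →
      ∃ ν : Measure (Fin n → M), IsProbabilityMeasure ν ∧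
        P = ν.bind (orbitMeasure n)) :=
  stmt_17_general n
end

section
/- Equivalence of q-means and k-means clustering: for x̄ = π(x) ∈ M^n/S_n, a sample ȳ in the q-skeleton minimizes d̄_p(x̄, ·) over the q-skeleton if and only if the distinct values z_1,...,z_r (r ≤ q) of ȳ, with appropriate multiplicities, minimize the k-means objective Σ_{i=1}^n min_{j≤q} d(x_i, z_j)^p over all choices of q points z_1,...,z_q ∈ M. -/
/-- The `L^p` distance `d_p(x,y) = ((1/n) Σᵢ d(xᵢ,yᵢ)^p)^(1/p)` on `M^n`. -/
noncomputable def dp {M : Type*} [MetricSpace M] (n : ℕ) (p : ℝ) (x y : Fin n → M) : ℝ :=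
  ((1 / (n : ℝ)) * ∑ i, dist (x i) (y i) ^ p) ^ (1 / p)

/-- The quotient distance `d̄_p(π x, π y) = inf_σ d_p(x, y∘σ)` on `M^n/S_n`. -/
noncomputable def dbar {M : Type*} [MetricSpace M] (n : ℕ) (p : ℝ) (x y : Fin n → M) : ℝ :=
  ⨅ σ : Equiv.Perm (Fin n), dp n p x (y ∘ σ)

/-- The `k`-means objective (with `k = q` centroids and power `p`):
`F(z) = Σᵢ min_j d(xᵢ, z_j)^p`. -/
noncomputable def kMeansObj {M : Type*} [MetricSpace M] (n q : ℕ) (p : ℝ)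
    (x : Fin n → M) (z : Fin q → M) : ℝ :=
  ∑ i, ⨅ j : Fin q, dist (x i) (z j) ^ p

/-!
Write `C(u) = ∑ᵢ d(xᵢ, uᵢ)^p`; then `d̄_p(π x, π u)` is an increasing function of
`C(u ∘ σ)` for a best matching permutation `σ`. For a finite set `S` of centres the
`k`-means objective equals `C(A)` for a nearest-point assignment `A` into `S`, and `A` lies
in the `q`-skeleton when `|S| ≤ q`, so both problems have the same optimal value. An optimal
`y`, once matched to `x` by `σ`, can do no better than the nearest-point assignment into its
own values, hence `y ∘ σ` is one, with the multiplicities of `y`.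
-/

open Set

section Fibers

variable {M : Type*} {n : ℕ}

lemma Set.exists_range_eq_of_ncard_le {q : ℕ} {s : Set M} (hne : s.Nonempty) (hfin : s.Finite)
    (hcard : s.ncard ≤ q) : ∃ z : Fin q → M, range z = s := by
  have : Nonempty s := hne.to_subtype
  have : Finite s := hfin
  let e : s ↪ Fin q :=
    (Finite.equivFin s).toEmbedding.trans (Fin.castLEEmb (by rwa [Nat.card_coe_set_eq]))
  refine ⟨Subtype.val ∘ Function.invFun e, ?_⟩
  rw [range_comp, (Function.invFun_surjective e.injective).range_eq, image_univ,
    Subtype.range_coe]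

lemma ncard_range_fin_le {q : ℕ} (w : Fin q → M) : (range w).ncard ≤ q := by
  simpa [Nat.card_coe_set_eq] using Finite.card_range_le w

lemma exists_perm_comp_eq_of_ncard_fiber_eq {A y : Fin n → M}
    (h : ∀ m : M, {i | A i = m}.ncard = {j | y j = m}.ncard) :
    ∃ σ : Equiv.Perm (Fin n), y ∘ σ = A := by
  have e : ∀ m : M, Nonempty ({i // A i = m} ≃ {j // y j = m}) := fun m =>
    Finite.card_eq.mp ((Nat.card_coe_set_eq _).trans ((h m).trans (Nat.card_coe_set_eq _).symm))
  exact ⟨Equiv.ofFiberEquiv fun m => (e m).some, funext fun i => Equiv.ofFiberEquiv_map _ i⟩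

lemma ncard_fiber_comp_perm (y : Fin n → M) (σ : Equiv.Perm (Fin n)) (m : M) :
    {i | (y ∘ σ) i = m}.ncard = {j | y j = m}.ncard :=
  ncard_preimage_of_injective_subset_range (s := {j | y j = m}) σ.injective (by simp)

end Fibers

noncomputable def powSum {M : Type*} [MetricSpace M] {n : ℕ} (p : ℝ) (x u : Fin n → M) : ℝ :=
  ∑ i, dist (x i) (u i) ^ p

def IsNearestAssignment {M : Type*} [MetricSpace M] {n : ℕ} (S : Set M) (x A : Fin n → M) :
    Prop :=
  ∀ i, A i ∈ S ∧ ∀ m ∈ S, dist (x i) (A i) ≤ dist (x i) m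

section Nearest

variable {M : Type*} [MetricSpace M] {n q : ℕ} {p : ℝ} {S : Set M} {x A u : Fin n → M}

lemma exists_isNearestAssignment (x : Fin n → M) (hfin : S.Finite) (hne : S.Nonempty) :
    ∃ A, IsNearestAssignment S x A := by
  choose A hA using fun i => S.exists_min_image (fun m => dist (x i) m) hfin hne
  exact ⟨A, hA⟩

lemma IsNearestAssignment.ncard_range_le (hA : IsNearestAssignment S x A) (hfin : S.Finite) :
    (range A).ncard ≤ S.ncard :=
  ncard_le_ncard (range_subset_iff.2 fun i => (hA i).1) hfin

lemma IsNearestAssignment.powSum_le (hp : 0 ≤ p) (hA : IsNearestAssignment S x A)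
    (hu : ∀ i, u i ∈ S) : powSum p x A ≤ powSum p x u :=
  Finset.sum_le_sum fun i _ => Real.rpow_le_rpow dist_nonneg ((hA i).2 _ (hu i)) hp

lemma IsNearestAssignment.of_powSum_le (hp : 0 < p) (hA : IsNearestAssignment S x A)
    (hu : ∀ i, u i ∈ S) (h : powSum p x u ≤ powSum p x A) : IsNearestAssignment S x u := by
  have hle : ∀ i ∈ Finset.univ, dist (x i) (A i) ^ p ≤ dist (x i) (u i) ^ p :=
    fun i _ => Real.rpow_le_rpow dist_nonneg ((hA i).2 _ (hu i)) hp.le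
  have heq := (Finset.sum_eq_sum_iff_of_le hle).1 (le_antisymm (hA.powSum_le hp.le hu) h)
  refine fun i => ⟨hu i, fun m hm => ?_⟩
  rw [← (Real.rpow_left_injOn hp.ne' dist_nonneg dist_nonneg (heq i (Finset.mem_univ i)))]
  exact (hA i).2 m hm

lemma kMeansObj_le_powSum {z : Fin q → M} (hu : ∀ i, u i ∈ range z) :
    kMeansObj n q p x z ≤ powSum p x u :=
  Finset.sum_le_sum fun i _ => by
    obtain ⟨j, hj⟩ := hu i
    exact hj ▸ ciInf_le (finite_range _).bddBelow j

lemma IsNearestAssignment.kMeansObj_eq (hp : 0 ≤ p) {z : Fin q → M} (hz : range z = S)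
    (hA : IsNearestAssignment S x A) : kMeansObj n q p x z = powSum p x A := by
  subst hz
  refine le_antisymm (kMeansObj_le_powSum fun i => (hA i).1) (Finset.sum_le_sum fun i _ => ?_)
  have : Nonempty (Fin q) := (hA i).1.nonempty
  exact le_ciInf fun j => Real.rpow_le_rpow dist_nonneg ((hA i).2 _ (mem_range_self j)) hp

end Nearest

section QuotientDistance

variable {M : Type*} [MetricSpace M] {n : ℕ} {p : ℝ}

lemma dp_le_dp_iff (hn : 1 ≤ n) (hp : 0 < p) {x u v : Fin n → M} :
    dp n p x u ≤ dp n p x v ↔ powSum p x u ≤ powSum p x v := by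
  have hn0 : (0 : ℝ) < 1 / n := by positivity
  have hnonneg : ∀ w : Fin n → M, 0 ≤ powSum p x w := fun w =>
    Finset.sum_nonneg fun i _ => Real.rpow_nonneg dist_nonneg p
  rw [dp, dp, ← powSum, ← powSum, Real.rpow_le_rpow_iff (mul_nonneg hn0.le (hnonneg u))
    (mul_nonneg hn0.le (hnonneg v)) (by positivity), mul_le_mul_iff_right₀ hn0]

lemma dbar_le_dp_comp (x u : Fin n → M) (σ : Equiv.Perm (Fin n)) :
    dbar n p x u ≤ dp n p x (u ∘ σ) :=
  ciInf_le (finite_range _).bddBelow σ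

lemma dbar_le_dp (x u : Fin n → M) : dbar n p x u ≤ dp n p x u :=
  dbar_le_dp_comp x u 1

lemma exists_perm_dbar_eq (p : ℝ) (x u : Fin n → M) :
    ∃ σ : Equiv.Perm (Fin n), dbar n p x u = dp n p x (u ∘ σ) :=
  (exists_eq_ciInf_of_finite (f := fun σ : Equiv.Perm (Fin n) => dp n p x (u ∘ σ))).imp
    fun _ h => h.symm

end QuotientDistance

theorem stmt_19_general {M : Type*} [MetricSpace M] (n q : ℕ) (hn : 1 ≤ n) (hq : 1 ≤ q)
    (p : ℝ) (hp : 1 ≤ p) (x y : Fin n → M)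
    (hy : (Set.range y).ncard ≤ q) :
    (∀ w : Fin n → M, (Set.range w).ncard ≤ q → dbar n p x y ≤ dbar n p x w) ↔
    ((∃ z : Fin q → M, Set.range z = Set.range y ∧
        ∀ w : Fin q → M, kMeansObj n q p x z ≤ kMeansObj n q p x w) ∧
      ∃ A : Fin n → M,
        (∀ i, A i ∈ Set.range y ∧ ∀ m ∈ Set.range y, dist (x i) (A i) ≤ dist (x i) m) ∧
        ∀ m : M, {i : Fin n | A i = m}.ncard = {j : Fin n | y j = m}.ncard) := by
  have hp0 : 0 < p := by linarith
  have : Nonempty (Fin n) := ⟨⟨0, hn⟩⟩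
  have : Nonempty (Fin q) := ⟨⟨0, hq⟩⟩
  constructor
  · intro hmin
    obtain ⟨σ, hσ⟩ := exists_perm_dbar_eq p x y
    have hopt : ∀ w : Fin n → M, (range w).ncard ≤ q → powSum p x (y ∘ σ) ≤ powSum p x w :=
      fun w hw => (dp_le_dp_iff hn hp0).1 (hσ ▸ (hmin w hw).trans (dbar_le_dp x w))
    obtain ⟨A, hA⟩ := exists_isNearestAssignment x (finite_range y) (range_nonempty y)
    have hyσ : IsNearestAssignment (range y) x (y ∘ σ) :=
      hA.of_powSum_le hp0 (fun i => mem_range_self _)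
        (hopt A ((hA.ncard_range_le (finite_range y)).trans hy))
    obtain ⟨z, hz⟩ := exists_range_eq_of_ncard_le (range_nonempty y) (finite_range y) hy
    refine ⟨⟨z, hz, fun w => ?_⟩, y ∘ σ, hyσ, ncard_fiber_comp_perm y σ⟩
    obtain ⟨A', hA'⟩ := exists_isNearestAssignment x (finite_range w) (range_nonempty w)
    rw [hyσ.kMeansObj_eq hp0.le hz, hA'.kMeansObj_eq hp0.le rfl]
    exact hopt A' ((hA'.ncard_range_le (finite_range w)).trans (ncard_range_fin_le w))
  · rintro ⟨⟨z, hz, hzmin⟩, A, hA, hAfib⟩ w hw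
    obtain ⟨σ, rfl⟩ := exists_perm_comp_eq_of_ncard_fiber_eq hAfib
    obtain ⟨τ, hτ⟩ := exists_perm_dbar_eq p x w
    obtain ⟨zw, hzw⟩ := exists_range_eq_of_ncard_le (range_nonempty w) (finite_range w) hw
    refine hτ ▸ (dbar_le_dp_comp x y σ).trans ((dp_le_dp_iff hn hp0).2 ?_)
    calc powSum p x (y ∘ σ) = kMeansObj n q p x z :=
          (IsNearestAssignment.kMeansObj_eq hp0.le hz hA).symm
      _ ≤ kMeansObj n q p x zw := hzmin zw
      _ ≤ powSum p x (w ∘ τ) := kMeansObj_le_powSum fun i => hzw ▸ mem_range_self (τ i)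

/-- Equivalence of `q`-means and `k`-means clustering: a sample `ȳ = π(y)` in the
`q`-skeleton minimizes `d̄_p(π x, ·)` over the `q`-skeleton if and only if the distinct
values of `y` (listed, with repetition allowed, as a `q`-tuple `z`) minimize the `k`-means
objective `Σᵢ min_j d(xᵢ, z_j)^p` over all `q`-tuples, with appropriate multiplicities:
the points `xᵢ` can be assigned to nearest values of `y` realizing exactly the
multiplicities of `y`. -/
theorem stmt_19 {M : Type*} [MetricSpace M] (n q : ℕ) (hn : 1 ≤ n) (hq : 1 ≤ q)
    (hqn : q ≤ n) (p : ℝ) (hp : 1 ≤ p) (x y : Fin n → M)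
    (hy : (Set.range y).ncard ≤ q) :
    (∀ w : Fin n → M, (Set.range w).ncard ≤ q → dbar n p x y ≤ dbar n p x w) ↔
    ((∃ z : Fin q → M, Set.range z = Set.range y ∧
        ∀ w : Fin q → M, kMeansObj n q p x z ≤ kMeansObj n q p x w) ∧
      ∃ A : Fin n → M,
        (∀ i, A i ∈ Set.range y ∧ ∀ m ∈ Set.range y, dist (x i) (A i) ≤ dist (x i) m) ∧
        ∀ m : M, {i : Fin n | A i = m}.ncard = {j : Fin n | y j = m}.ncard) :=
  stmt_19_general n q hn hq p hp x y hy
end
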